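/- Let n, s, δ be positive integers with δ not divisible by 3, s ≡ 1 (mod 3), δ + 2 ≤ s, 5s ≤ 3n − 1, and n ≥ max( (6δ² + 22δ + 31)/6, (20δ + 56)/3 ). Then the spectral radius of K_s ∨ (K_{n−⌊5s/3⌋−1} ∪ (⌊2s/3⌋+1)·K_1) is strictly less than n − ⌊2δ/3⌋ − 2. -/

import Mathlib

open SimpleGraph Finset

set_option maxHeartbeats 1000000

/-- The number of isolated vertices of the induced subgraph `G - S`:
vertices outside `S` with no neighbor outside `S`. -/
noncomputable def isolatedCount {V : Type*} (G : SimpleGraph V) (S : Finset V) : ℕ :=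
  {v : V | v ∉ S ∧ ∀ w ∉ S, ¬ G.Adj v w}.ncard

/-- `G` has a `{P₃, P₄, P₅}`-factor: a spanning subgraph each of whose connected
components is isomorphic to a path on 3, 4 or 5 vertices. -/
def HasP345Factor {V : Type*} (G : SimpleGraph V) : Prop :=
  ∃ H : SimpleGraph V, H ≤ G ∧
    ∀ c : H.ConnectedComponent, ∃ k, (k = 3 ∨ k = 4 ∨ k = 5) ∧
      Nonempty ((SimpleGraph.induce c.supp H) ≃g SimpleGraph.pathGraph k)

/-- The graph `K_s ∨ (K_{n-⌊5s/3⌋-1} ∪ (⌊2s/3⌋+1)·K_1)` on `n` vertices: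
vertices `< s` form the clique `K_s` joined with everything, vertices in
`[s, n - ⌊2s/3⌋ - 1)` form the clique `K_{n-⌊5s/3⌋-1}`, and the remaining
`⌊2s/3⌋ + 1` vertices are isolated in the second part of the join. -/
def extremalGraph (n s : ℕ) : SimpleGraph (Fin n) where
  Adj v w := v ≠ w ∧ ((v : ℕ) < s ∨ (w : ℕ) < s ∨
    ((v : ℕ) < n - 2 * s / 3 - 1 ∧ (w : ℕ) < n - 2 * s / 3 - 1))
  symm := ⟨fun v w h => ⟨h.1.symm, by tauto⟩⟩
  loopless := ⟨fun v h => h.1 rfl⟩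

/-- The spectral radius of a graph: the largest eigenvalue of its adjacency
matrix over the reals. -/
noncomputable def specRad {V : Type*} [Finite V] (G : SimpleGraph V) : ℝ :=
  letI := Fintype.ofFinite V
  letI := Classical.decEq V
  letI := Classical.decRel G.Adj
  sSup (spectrum ℝ (G.adjMatrix ℝ))


lemma eigvec_exists {V : Type*} [Fintype V] [DecidableEq V] (A : Matrix V V ℝ) (μ : ℝ)
    (hμ : μ ∈ spectrum ℝ A) : ∃ x : V → ℝ, x ≠ 0 ∧ A.mulVec x = μ • x := by
  rw [spectrum.mem_iff, Matrix.isUnit_iff_isUnit_det, isUnit_iff_ne_zero, not_ne_iff,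
    ← Matrix.exists_mulVec_eq_zero_iff] at hμ
  obtain ⟨x, hx0, hx⟩ := hμ
  refine ⟨x, hx0, ?_⟩
  rw [Matrix.sub_mulVec, Algebra.algebraMap_eq_smul_one, Matrix.smul_mulVec,
    Matrix.one_mulVec, sub_eq_zero] at hx
  exact hx.symm

lemma hong {V : Type*} [Fintype V] [DecidableEq V] (G : SimpleGraph V) [DecidableRel G.Adj]
    (hmin : ∀ v, 1 ≤ G.degree v) (μ : ℝ) (hμ : μ ∈ spectrum ℝ (G.adjMatrix ℝ)) :
    μ ^ 2 ≤ (∑ v, (G.degree v : ℝ)) - Fintype.card V + 1 := by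
  obtain ⟨x, hx0, hx⟩ := eigvec_exists _ μ hμ
  -- key counting bound in ℕ
  have key : ∀ j : V, (∑ i ∈ G.neighborFinset j, G.degree i) + (Fintype.card V - 1)
      ≤ ∑ i, G.degree i := by
    intro j
    have hsub : G.neighborFinset j ⊆ univ := subset_univ _
    rw [← Finset.sum_sdiff hsub]
    have hj : j ∈ univ \ G.neighborFinset j := by
      simp [SimpleGraph.mem_neighborFinset]
    have hcard : (univ \ G.neighborFinset j).card = Fintype.card V - G.degree j := by
      rw [Finset.card_sdiff_of_subset hsub, Finset.card_univ, card_neighborFinset_eq_degree]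
    have hdeg_le : G.degree j + 1 ≤ Fintype.card V := by
      have : G.neighborFinset j ⊆ univ.erase j := by
        intro w hw
        rw [Finset.mem_erase]
        refine ⟨?_, mem_univ w⟩
        intro h
        subst h
        exact G.irrefl (by rwa [SimpleGraph.mem_neighborFinset] at hw)
      have h1 := Finset.card_le_card this
      have h2 : 1 ≤ Fintype.card V := Fintype.card_pos_iff.mpr ⟨j⟩
      rw [card_neighborFinset_eq_degree, Finset.card_erase_of_mem (mem_univ j), Finset.card_univ] at h1
      omega
    have hrest : ∑ i ∈ (univ \ G.neighborFinset j).erase j, G.degree i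
        ≥ ((univ \ G.neighborFinset j).erase j).card := by
      calc ((univ \ G.neighborFinset j).erase j).card
          = ∑ _i ∈ (univ \ G.neighborFinset j).erase j, 1 := by simp
        _ ≤ _ := Finset.sum_le_sum fun i _ => hmin i
    have hsplit : ∑ i ∈ (univ \ G.neighborFinset j).erase j, G.degree i + G.degree j
        = ∑ i ∈ univ \ G.neighborFinset j, G.degree i := Finset.sum_erase_add _ _ hj
    have hec : ((univ \ G.neighborFinset j).erase j).card
        = Fintype.card V - G.degree j - 1 := by
      rw [Finset.card_erase_of_mem hj, hcard]
    omega
  classical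
  set D : ℝ := ∑ v, (G.degree v : ℝ) with hD
  have keyR : ∀ j : V, (∑ i ∈ G.neighborFinset j, (G.degree i : ℝ)) ≤ D - Fintype.card V + 1 := by
    intro j
    have hcV : 1 ≤ Fintype.card V := Fintype.card_pos_iff.mpr ⟨j⟩
    have := key j
    have hcast : ((∑ i ∈ G.neighborFinset j, G.degree i : ℕ) : ℝ) + ((Fintype.card V - 1 : ℕ) : ℝ)
        ≤ ((∑ i, G.degree i : ℕ) : ℝ) := by exact_mod_cast this
    rw [Nat.cast_sub hcV] at hcast
    push_cast at hcast ⊢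
    linarith
  have hS : 0 < ∑ i, x i ^ 2 := by
    obtain ⟨i, hi⟩ := Function.ne_iff.mp hx0
    exact Finset.sum_pos' (fun j _ => sq_nonneg _) ⟨i, Finset.mem_univ i, pow_two_pos_of_ne_zero hi⟩
  have hstep : ∀ i, μ * x i = ∑ j ∈ G.neighborFinset i, x j := by
    intro i
    rw [← SimpleGraph.adjMatrix_mulVec_apply _ _ x, hx]
    rfl
  have exch : ∑ i, (G.degree i : ℝ) * ∑ j ∈ G.neighborFinset i, x j ^ 2
      = ∑ j, x j ^ 2 * ∑ i ∈ G.neighborFinset j, (G.degree i : ℝ) := by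
    simp_rw [SimpleGraph.neighborFinset_eq_filter, Finset.sum_filter, Finset.mul_sum]
    rw [Finset.sum_comm]
    refine Finset.sum_congr rfl fun j _ => Finset.sum_congr rfl fun i _ => ?_
    by_cases h : G.Adj i j
    · rw [if_pos h, if_pos (G.adj_comm i j |>.mp h)]; ring
    · rw [if_neg h, if_neg (fun h' => h ((G.adj_comm i j).mpr h'))]; ring
  have main : μ ^ 2 * (∑ i, x i ^ 2) ≤ (D - Fintype.card V + 1) * (∑ i, x i ^ 2) := by
    calc μ ^ 2 * ∑ i, x i ^ 2 = ∑ i, (μ * x i) ^ 2 := by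
          rw [Finset.mul_sum]; exact Finset.sum_congr rfl fun i _ => by ring
      _ = ∑ i, (∑ j ∈ G.neighborFinset i, x j) ^ 2 := by
          exact Finset.sum_congr rfl fun i _ => by rw [hstep]
      _ ≤ ∑ i, (G.degree i : ℝ) * ∑ j ∈ G.neighborFinset i, x j ^ 2 := by
          refine Finset.sum_le_sum fun i _ => ?_
          have h := sq_sum_le_card_mul_sum_sq (s := G.neighborFinset i) (f := x)
          rwa [card_neighborFinset_eq_degree] at h
      _ = ∑ j, x j ^ 2 * ∑ i ∈ G.neighborFinset j, (G.degree i : ℝ) := exch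
      _ ≤ ∑ j, x j ^ 2 * (D - Fintype.card V + 1) := by
          exact Finset.sum_le_sum fun j _ => mul_le_mul_of_nonneg_left (keyR j) (sq_nonneg _)
      _ = (D - Fintype.card V + 1) * ∑ i, x i ^ 2 := by
          rw [← Finset.sum_mul]; ring
  exact le_of_mul_le_mul_right main hS

lemma extremalGraph_adj {n s : ℕ} {v w : Fin n} : (extremalGraph n s).Adj v w ↔
    v ≠ w ∧ ((v : ℕ) < s ∨ (w : ℕ) < s ∨
    ((v : ℕ) < n - 2 * s / 3 - 1 ∧ (w : ℕ) < n - 2 * s / 3 - 1)) := Iff.rfl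

instance extremalGraphDec (n s : ℕ) : DecidableRel (extremalGraph n s).Adj := fun v w =>
  decidable_of_iff _ extremalGraph_adj.symm

-- count of Fin n with val < c
lemma card_val_lt {n c : ℕ} (h : c < n) :
    (univ.filter (fun w : Fin n => (w : ℕ) < c)).card = c := by
  have : (univ.filter (fun w : Fin n => (w : ℕ) < c)) = Finset.Iio (⟨c, h⟩ : Fin n) := by
    ext w
    simp [Fin.lt_def]
  rw [this, Fin.card_Iio]

lemma extremal_degree {n s : ℕ} [inst1 : Fintype (Fin n)] [inst2 : DecidableEq (Fin n)]
    [inst3 : DecidableRel (extremalGraph n s).Adj]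
    (h1 : 1 ≤ s) (h2 : s ≤ n - 2 * s / 3 - 1) (h3 : n - 2 * s / 3 - 1 < n) (v : Fin n) :
    (extremalGraph n s).degree v =
      if (v : ℕ) < s then n - 1 else if (v : ℕ) < n - 2 * s / 3 - 1 then n - 2 * s / 3 - 2
      else s := by
  have e1 : inst1 = Fin.fintype n := Subsingleton.elim _ _
  subst e1
  have e3 : inst3 = extremalGraphDec n s := Subsingleton.elim _ _
  subst e3
  set c := n - 2 * s / 3 - 1 with hc
  rw [← card_neighborFinset_eq_degree, neighborFinset_eq_filter]
  by_cases hv : (v : ℕ) < s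
  · rw [if_pos hv]
    have : univ.filter ((extremalGraph n s).Adj v) = univ.erase v := by
      ext w
      simp only [Finset.mem_filter, Finset.mem_erase, mem_univ, and_true, true_and,
        extremalGraph_adj]
      constructor
      · exact fun h => h.1.symm
      · exact fun h => ⟨h.symm, Or.inl hv⟩
    rw [this, Finset.card_erase_of_mem (mem_univ v), Finset.card_univ, Fintype.card_fin]
  · rw [if_neg hv]
    by_cases hv2 : (v : ℕ) < c
    · rw [if_pos hv2]
      have : univ.filter ((extremalGraph n s).Adj v) =
          (univ.filter (fun w : Fin n => (w : ℕ) < c)).erase v := by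
        ext w
        simp only [Finset.mem_filter, Finset.mem_erase, mem_univ, and_true, true_and,
          extremalGraph_adj]
        constructor
        · rintro ⟨hne, hor⟩
          refine ⟨fun h => hne (by rw [h]), ?_⟩
          rcases hor with h | h | h
          · omega
          · omega
          · exact h.2
        · rintro ⟨hne, hw⟩
          exact ⟨fun h => hne (by rw [h]), Or.inr (Or.inr ⟨hv2, hw⟩)⟩
      rw [this, Finset.card_erase_of_mem, card_val_lt h3]
      · omega
      · exact Finset.mem_filter.mpr ⟨mem_univ v, hv2⟩
    · rw [if_neg hv2]
      have : univ.filter ((extremalGraph n s).Adj v) =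
          univ.filter (fun w : Fin n => (w : ℕ) < s) := by
        ext w
        simp only [Finset.mem_filter, mem_univ, true_and, extremalGraph_adj]
        constructor
        · rintro ⟨hne, hor⟩
          rcases hor with h | h | h
          · omega
          · exact h
          · omega
        · intro hw
          refine ⟨fun h => ?_, Or.inr (Or.inl hw)⟩
          subst h
          omega
      rw [this, card_val_lt (by omega)]

lemma extremal_degsum {n s : ℕ} [inst1 : Fintype (Fin n)] [inst2 : DecidableEq (Fin n)]
    [inst3 : DecidableRel (extremalGraph n s).Adj]
    (h1 : 1 ≤ s) (h2 : s ≤ n - 2 * s / 3 - 1) (h3 : n - 2 * s / 3 - 1 < n) :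
    ∑ v : Fin n, (extremalGraph n s).degree v =
      s * (n - 1) + (n - 2 * s / 3 - 1 - s) * (n - 2 * s / 3 - 2)
        + (n - (n - 2 * s / 3 - 1)) * s := by
  have e1 : inst1 = Fin.fintype n := Subsingleton.elim _ _
  subst e1
  set c := n - 2 * s / 3 - 1 with hc
  calc ∑ v : Fin n, (extremalGraph n s).degree v
      = ∑ v : Fin n, (if (v : ℕ) < s then n - 1 else if (v : ℕ) < c then n - 2 * s / 3 - 2 else s) :=
        Finset.sum_congr rfl fun v _ => extremal_degree h1 h2 h3 v
    _ = ∑ i ∈ Finset.range n, (if i < s then n - 1 else if i < c then n - 2 * s / 3 - 2 else s) :=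
        Fin.sum_univ_eq_sum_range (fun i => if i < s then n - 1 else if i < c then n - 2 * s / 3 - 2 else s) n
    _ = s * (n - 1) + (c - s) * (n - 2 * s / 3 - 2) + (n - c) * s := by
        rw [Finset.range_eq_Ico,
          ← Finset.sum_Ico_consecutive _ (Nat.zero_le s) (by omega : s ≤ n),
          ← Finset.sum_Ico_consecutive _ (h2 : s ≤ c) (le_of_lt h3)]
        have e1 : ∑ i ∈ Finset.Ico 0 s, (if i < s then n - 1 else if i < c then n - 2 * s / 3 - 2 else s)
            = s * (n - 1) := by
          rw [Finset.sum_const_nat (m := n - 1) (fun i hi => by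
            rw [Finset.mem_Ico] at hi; rw [if_pos hi.2]), Nat.card_Ico]
          rw [Nat.sub_zero]
        have e2 : ∑ i ∈ Finset.Ico s c, (if i < s then n - 1 else if i < c then n - 2 * s / 3 - 2 else s)
            = (c - s) * (n - 2 * s / 3 - 2) := by
          rw [Finset.sum_const_nat (m := n - 2 * s / 3 - 2) (fun i hi => by
            rw [Finset.mem_Ico] at hi; rw [if_neg (by omega : ¬ i < s), if_pos hi.2]), Nat.card_Ico]
        have e3 : ∑ i ∈ Finset.Ico c n, (if i < s then n - 1 else if i < c then n - 2 * s / 3 - 2 else s)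
            = (n - c) * s := by
          rw [Finset.sum_const_nat (m := s) (fun i hi => by
            rw [Finset.mem_Ico] at hi
            rw [if_neg (by omega : ¬ i < s), if_neg (by omega : ¬ i < c)]), Nat.card_Ico]
        rw [e1, e2, e3, Nat.add_assoc]
lemma arith (n s δ : ℕ) (hδ1 : 1 ≤ δ) (hδ3 : ¬ (3 ∣ δ)) (hs : s % 3 = 1) (hsδ : δ + 2 ≤ s)
    (hsn : 5 * s + 1 ≤ 3 * n) (hA : 6*δ^2+22*δ+31 ≤ 6*n) (hB : 20*δ+56 ≤ 3*n) :
    ((s * (n - 1) + (n - 2*s/3 - 1 - s) * (n - 2*s/3 - 2) + (n - (n - 2*s/3 - 1)) * s : ℕ) : ℝ)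
      - n + 1 < ((n : ℝ) - (2 * δ / 3 : ℕ) - 2)^2 := by
  obtain ⟨k, hk⟩ : ∃ k, s = 3*k+1 := ⟨s/3, by omega⟩
  have hn5 : 5*k + 2 ≤ n := by omega
  rw [show n - 2*s/3 - 1 - s = n - (5*k+2) by omega,
      show n - 2*s/3 - 2 = n - (2*k+2) by omega,
      show n - (n - 2*s/3 - 1) = 2*k+1 by omega, hk]
  obtain ⟨j, hj⟩ : ∃ j, δ = 3*j+1 ∨ δ = 3*j+2 := ⟨δ/3, by omega⟩
  have hAR : 6*((δ:ℝ))^2 + 22*δ + 31 ≤ 6*(n:ℝ) := by exact_mod_cast hA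
  have hBR : 20*(δ:ℝ) + 56 ≤ 3*(n:ℝ) := by exact_mod_cast hB
  have hn5R : 5*(k:ℝ) + 2 ≤ (n:ℝ) := by exact_mod_cast hn5
  have hj0 : (0:ℝ) ≤ (j:ℝ) := Nat.cast_nonneg j
  rcases hj with hj | hj
  · rw [show 2*δ/3 = 2*j by omega]
    have hkj : j + 1 ≤ k := by omega
    have hkjR : (j:ℝ) + 1 ≤ (k:ℝ) := by exact_mod_cast hkj
    have hδR : (δ:ℝ) = 3*j+1 := by exact_mod_cast hj
    rw [hδR] at hAR hBR
    push_cast [Nat.cast_sub (show 1 ≤ n by omega), Nat.cast_sub (show (5*k+2) ≤ n by omega),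
      Nat.cast_sub (show (2*k+2) ≤ n by omega)]
    set N := (n:ℝ); set K := (k:ℝ); set J := (j:ℝ)
    have h0 : (0:ℝ) < 4*N - 12*J^2 - 40*J - 33 := by nlinarith [sq_nonneg J]
    have hA2 : (0:ℝ) < 4*N^2 - (100*J+56)*N + 100*(J+1)^2 - 29 := by
      nlinarith [sq_nonneg (N - 20*J - 76/3), mul_nonneg hj0 (by linarith : (0:ℝ) ≤ 3*N - 60*J - 76),
        mul_nonneg hj0 (by nlinarith [sq_nonneg J] : (0:ℝ) ≤ 6*N - 54*J^2 - 102*J - 59),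
        mul_nonneg (mul_nonneg hj0 hj0) hj0, sq_nonneg J]
    have hpos : (0:ℝ) < 4*N*(K-J) - 16*K^2 - 16*K - 5 + 4*(J+1)^2 := by
      by_cases hu : k = j + 1
      · have : K = J + 1 := by simp only [K, J, hu]; push_cast; ring
        rw [this]; nlinarith [h0]
      · have hu1 : (1:ℝ) ≤ K - J - 1 := by
          have h2 : j + 2 ≤ k := by omega
          have := (Nat.cast_le (α := ℝ)).mpr h2
          push_cast at this; linarith
        have hw : (0:ℝ) ≤ N - 2 - 5*K := by linarith
        have hid : 5*(4*N*(K-J) - 16*K^2 - 16*K - 5 + 4*(J+1)^2)*(5*(K-J-1)+(N-2-5*K))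
            = 5*(N-2-5*K)*(4*N - 12*J^2 - 40*J - 33)
              + (K-J-1)*(4*N^2 - (100*J+56)*N + 100*(J+1)^2 - 29)
              + 16*(K-J-1)*(N-2-5*K)*(5*(K-J-1)+(N-2-5*K)) := by ring
        have p1 : (0:ℝ) ≤ (N-2-5*K)*(4*N - 12*J^2 - 40*J - 33) := mul_nonneg hw h0.le
        have p2 : 4*N^2 - (100*J+56)*N + 100*(J+1)^2 - 29
            ≤ (K-J-1)*(4*N^2 - (100*J+56)*N + 100*(J+1)^2 - 29) :=
          le_mul_of_one_le_left hA2.le hu1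
        have p3 : (0:ℝ) ≤ (K-J-1)*(N-2-5*K)*(5*(K-J-1)+(N-2-5*K)) := by
          apply mul_nonneg (mul_nonneg (by linarith) hw); linarith
        have hprod : (0:ℝ) < 5*(4*N*(K-J) - 16*K^2 - 16*K - 5 + 4*(J+1)^2)*(5*(K-J-1)+(N-2-5*K)) := by
          rw [hid]; linarith
        rcases mul_pos_iff.mp hprod with ⟨ha, _⟩ | ⟨_, hb⟩
        · linarith
        · linarith
    nlinarith [hpos]
  · rw [show 2*δ/3 = 2*j+1 by omega]
    have hkj : j + 1 ≤ k := by omega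
    have hkjR : (j:ℝ) + 1 ≤ (k:ℝ) := by exact_mod_cast hkj
    have hδR : (δ:ℝ) = 3*j+2 := by exact_mod_cast hj
    rw [hδR] at hAR hBR
    push_cast [Nat.cast_sub (show 1 ≤ n by omega), Nat.cast_sub (show (5*k+2) ≤ n by omega),
      Nat.cast_sub (show (2*k+2) ≤ n by omega)]
    set N := (n:ℝ); set K := (k:ℝ); set J := (j:ℝ)
    have h0 : (0:ℝ) < 2*N - 12*J^2 - 36*J - 28 := by nlinarith [sq_nonneg J]
    have hA2 : (0:ℝ) < 4*N^2 - (100*J+106)*N + 100*J^2 + 300*J + 196 := by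
      nlinarith [sq_nonneg (N - 20*J - 32), mul_nonneg hj0 (by linarith : (0:ℝ) ≤ 3*N - 60*J - 96),
        mul_nonneg hj0 (by nlinarith [sq_nonneg J] : (0:ℝ) ≤ 6*N - 54*J^2 - 138*J - 99),
        mul_nonneg (mul_nonneg hj0 hj0) hj0, sq_nonneg J]
    have hpos : (0:ℝ) < 4*N*(K-J) - 2*N - 16*K^2 - 16*K - 5 + (2*J+3)^2 := by
      by_cases hu : k = j + 1
      · have : K = J + 1 := by simp only [K, J, hu]; push_cast; ring
        rw [this]; nlinarith [h0]
      · have hu1 : (1:ℝ) ≤ K - J - 1 := by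
          have h2 : j + 2 ≤ k := by omega
          have := (Nat.cast_le (α := ℝ)).mpr h2
          push_cast at this; linarith
        have hw : (0:ℝ) ≤ N - 2 - 5*K := by linarith
        have hid : 5*(4*N*(K-J) - 2*N - 16*K^2 - 16*K - 5 + (2*J+3)^2)*(5*(K-J-1)+(N-2-5*K))
            = 5*(N-2-5*K)*(2*N - 12*J^2 - 36*J - 28)
              + (K-J-1)*(4*N^2 - (100*J+106)*N + 100*J^2 + 300*J + 196)
              + 16*(K-J-1)*(N-2-5*K)*(5*(K-J-1)+(N-2-5*K)) := by ring
        have p1 : (0:ℝ) ≤ (N-2-5*K)*(2*N - 12*J^2 - 36*J - 28) := mul_nonneg hw h0.le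
        have p2 : 4*N^2 - (100*J+106)*N + 100*J^2 + 300*J + 196
            ≤ (K-J-1)*(4*N^2 - (100*J+106)*N + 100*J^2 + 300*J + 196) :=
          le_mul_of_one_le_left hA2.le hu1
        have p3 : (0:ℝ) ≤ (K-J-1)*(N-2-5*K)*(5*(K-J-1)+(N-2-5*K)) := by
          apply mul_nonneg (mul_nonneg (by linarith) hw); linarith
        have hprod : (0:ℝ) < 5*(4*N*(K-J) - 2*N - 16*K^2 - 16*K - 5 + (2*J+3)^2)*(5*(K-J-1)+(N-2-5*K)) := by
          rw [hid]; linarith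
        rcases mul_pos_iff.mp hprod with ⟨ha, _⟩ | ⟨_, hb⟩
        · linarith
        · linarith
    nlinarith [hpos]

lemma final_bound (n s δ : ℕ) [inst1 : Fintype (Fin n)] [inst2 : DecidableEq (Fin n)]
    [inst3 : DecidableRel (extremalGraph n s).Adj]
    (hδ1 : 1 ≤ δ) (hδ3 : ¬ (3 ∣ δ)) (hs : s % 3 = 1) (hsδ : δ + 2 ≤ s)
    (hsn : 5 * s + 1 ≤ 3 * n) (hA : 6*δ^2+22*δ+31 ≤ 6*n) (hB : 20*δ+56 ≤ 3*n) :
    sSup (spectrum ℝ ((extremalGraph n s).adjMatrix ℝ)) < (n : ℝ) - ((2 * δ / 3 : ℕ) : ℝ) - 2 := by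
  have e1 : inst1 = Fin.fintype n := Subsingleton.elim _ _
  subst e1
  have e2 : inst2 = instDecidableEqFin n := Subsingleton.elim _ _
  subst e2
  have e3 : inst3 = extremalGraphDec n s := Subsingleton.elim _ _
  subst e3
  have h1 : 1 ≤ s := by omega
  have h2 : s ≤ n - 2*s/3 - 1 := by omega
  have h3 : n - 2*s/3 - 1 < n := by omega
  have hmin : ∀ v : Fin n, 1 ≤ (extremalGraph n s).degree v := by
    intro v
    rw [extremal_degree h1 h2 h3 v]
    split_ifs <;> omega
  have hsum := extremal_degsum (n := n) (s := s) h1 h2 h3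
  set X : ℝ := (n : ℝ) - ((2 * δ / 3 : ℕ) : ℝ) - 2 with hX
  have hXpos : 0 < X := by
    have hle : 2*δ/3 + 3 ≤ n := by omega
    have := (Nat.cast_le (α := ℝ)).mpr hle
    push_cast at this
    rw [hX]; linarith
  have hBX : ((∑ v : Fin n, (extremalGraph n s).degree v : ℕ) : ℝ) - n + 1 < X^2 := by
    rw [hsum, hX]
    exact arith n s δ hδ1 hδ3 hs hsδ hsn hA hB
  have step1 : ∀ μ ∈ spectrum ℝ ((extremalGraph n s).adjMatrix ℝ),
      μ ≤ Real.sqrt (((∑ v : Fin n, (extremalGraph n s).degree v : ℕ) : ℝ) - n + 1) := by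
    intro μ hμ
    have hh := hong (extremalGraph n s) hmin μ hμ
    have hcast : (∑ v : Fin n, ((extremalGraph n s).degree v : ℝ))
        = ((∑ v : Fin n, (extremalGraph n s).degree v : ℕ) : ℝ) := by push_cast; rfl
    rw [hcast, Fintype.card_fin] at hh
    calc μ ≤ |μ| := le_abs_self μ
      _ = Real.sqrt (μ^2) := (Real.sqrt_sq_eq_abs μ).symm
      _ ≤ Real.sqrt _ := Real.sqrt_le_sqrt hh
  refine lt_of_le_of_lt (Real.sSup_le step1 (Real.sqrt_nonneg _)) ?_
  exact (Real.sqrt_lt' hXpos).mpr hBX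

theorem stmt17 (n s δ : ℕ) (hn1 : 1 ≤ n) (hs1 : 1 ≤ s) (hδ1 : 1 ≤ δ)
    (hδ3 : ¬ (3 ∣ δ)) (hs : s % 3 = 1) (hsδ : δ + 2 ≤ s) (hsn : 5 * s + 1 ≤ 3 * n)
    (hn : max ((6 * (δ : ℚ) ^ 2 + 22 * δ + 31) / 6) ((20 * (δ : ℚ) + 56) / 3) ≤ (n : ℚ)) :
    specRad (extremalGraph n s) < (n : ℝ) - (2 * δ / 3 : ℕ) - 2 := by
  rw [max_le_iff] at hn
  obtain ⟨hA, hB⟩ := hn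
  have hA' : 6*δ^2+22*δ+31 ≤ 6*n := by
    have hq : 6*(δ:ℚ)^2+22*(δ:ℚ)+31 ≤ 6*(n:ℚ) := by linarith
    exact_mod_cast hq
  have hB' : 20*δ+56 ≤ 3*n := by
    have hq : 20*(δ:ℚ)+56 ≤ 3*(n:ℚ) := by linarith
    exact_mod_cast hq
  unfold specRad
  exact @final_bound n s δ (Fintype.ofFinite _) (Classical.decEq _) (Classical.decRel _)
    hδ1 hδ3 hs hsδ hsn hA' hB'
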